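/- With the notation of the context, for every j ∈ ℤ with α_j + β_j ≥ 1 one has ⟨j⟩² · ∏_{l=3}^N n̂_l ≤ (N + |π|) · ∏_{i∈ℤ} ⟨i⟩^{α_i+β_i}. -/

import Mathlib

open scoped BigOperators

/-!
Since `∏ᵢ ⟨i⟩^{αᵢ+βᵢ} = n̂₁ n̂₂ ∏_{l≥3} n̂_l`, it suffices to show `⟨j⟩ ≤ (N + |π|) n̂₂`, as
`⟨j⟩ ≤ n̂₁` anyway. This is clear if `⟨j⟩ ≤ n̂₂`. Otherwise `⟨j⟩ = n̂₁ = |j| > 1`, and isolating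
the `j`-th term of the momentum gives `2|j| ≤ |π| + ∑ᵢ |i|(αᵢ+βᵢ) ≤ |π| + n̂₁ + (N-1) n̂₂`,
i.e. `|j| ≤ |π| + (N-1) n̂₂ ≤ (N + |π|) n̂₂` because `n̂₂ ≥ 1`. A missing `n̂₂` (when `N = 1`)
is read as `1`.
-/

/-- `⟨j⟩ := max(|j|,1)` as a real number. -/
noncomputable def jap (j : ℤ) : ℝ := max (|(j : ℝ)|) 1

theorem one_le_jap (i : ℤ) : 1 ≤ jap i := le_max_right _ _

theorem abs_le_jap (i : ℤ) : |(i : ℝ)| ≤ jap i := le_max_left _ _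

theorem jap_eq_abs_of_one_lt {i : ℤ} (h : 1 < jap i) : jap i = |(i : ℝ)| :=
  max_eq_left (not_lt.1 fun hi => h.ne' (max_eq_right hi.le))

@[to_additive]
theorem Finsupp.prod_map_toMultiset_of_support_subset {ι M : Type*} [CommMonoid M]
    [DecidableEq ι] (m : ι →₀ ℕ) (f : ι → M) {s : Finset ι} (hs : m.support ⊆ s) :
    (m.toMultiset.map f).prod = ∏ i ∈ s, f i ^ m i := by
  calc (m.toMultiset.map f).prod = ∏ i ∈ m.support, f i ^ m i := by
        rw [Finset.prod_multiset_map_count, Finsupp.toFinset_toMultiset]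
        simp only [Finsupp.count_toMultiset]
    _ = ∏ i ∈ s, f i ^ m i :=
        Finset.prod_subset hs fun i _ hi => by rw [Finsupp.notMem_support_iff.1 hi, pow_zero]

theorem two_mul_abs_le_abs_sum_mul_sub_add {ι : Type*} {s : Finset ι} {x : ι → ℝ}
    {a b : ι → ℕ} {j : ι} (hj : j ∈ s) (hab : 1 ≤ a j + b j) :
    2 * |x j| ≤ |∑ i ∈ s, x i * ((a i : ℝ) - b i)| + ∑ i ∈ s, |x i| * ((a i : ℝ) + b i) := by
  set f : ι → ℝ := fun i => x i * ((a i : ℝ) - b i)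
  set g : ι → ℝ := fun i => |x i| * ((a i : ℝ) + b i)
  have hfg : ∀ i, |f i| ≤ g i := fun i => by
    rw [abs_mul]
    refine mul_le_mul_of_nonneg_left (abs_le.2 ⟨?_, ?_⟩) (abs_nonneg _) <;>
      linarith [(a i).cast_nonneg (α := ℝ), (b i).cast_nonneg (α := ℝ)]
  have hj2 : 2 * |x j| ≤ g j + |f j| := by
    have hmax : (1 : ℝ) ≤ max (a j : ℝ) (b j) := by
      exact_mod_cast (show 1 ≤ max (a j) (b j) by omega)
    have h2 : 2 ≤ (a j : ℝ) + b j + |(a j : ℝ) - b j| := by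
      rw [← max_sub_min_eq_abs']
      linarith [min_add_max (a j : ℝ) (b j)]
    calc 2 * |x j| = |x j| * 2 := mul_comm _ _
      _ ≤ |x j| * ((a j : ℝ) + b j + |(a j : ℝ) - b j|) :=
          mul_le_mul_of_nonneg_left h2 (abs_nonneg _)
      _ = g j + |f j| := by simp only [f, g, abs_mul]; ring
  -- Each `g i + ε f i` is nonnegative, so the `j`-th one is bounded by their sum.
  have hsign : ∀ ε : ℝ, |ε| = 1 → g j + ε * f j ≤ ∑ i ∈ s, g i + |∑ i ∈ s, f i| := by
    intro ε hε
    have hnonneg : ∀ i ∈ s, 0 ≤ g i + ε * f i := fun i _ => by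
      have : |ε * f i| ≤ g i := by rw [abs_mul, hε, one_mul]; exact hfg i
      linarith [neg_abs_le (ε * f i)]
    calc g j + ε * f j ≤ ∑ i ∈ s, (g i + ε * f i) := Finset.single_le_sum hnonneg hj
      _ = ∑ i ∈ s, g i + ε * ∑ i ∈ s, f i := by rw [Finset.sum_add_distrib, Finset.mul_sum]
      _ ≤ ∑ i ∈ s, g i + |∑ i ∈ s, f i| := by
          have := le_abs_self (ε * ∑ i ∈ s, f i)
          rw [abs_mul, hε, one_mul] at this
          linarith
  rcases abs_choice (f j) with h | h
  · linarith [hsign 1 abs_one]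
  · linarith [hsign (-1) (by simp)]

theorem sq_le_length_add_mul_mul_of_mem_cons {a b c x : ℝ} {t : List ℝ} (hb : 1 ≤ b)
    (hc : 0 ≤ c) (ht : ∀ y ∈ t, y ≤ b) (hx : x ∈ a :: t) (hx0 : 0 ≤ x) (hxa : x ≤ a)
    (hmom : 1 < x → 2 * x ≤ c + (a :: t).sum) :
    x ^ 2 ≤ ((a :: t).length + c) * (a * b) := by
  have hxb : x ≤ ((a :: t).length + c) * b := by
    rw [List.length_cons, Nat.cast_add_one]
    by_cases hle : x ≤ b
    · refine hle.trans (le_mul_of_one_le_left (by linarith) ?_)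
      have : (0 : ℝ) ≤ t.length := t.length.cast_nonneg
      linarith
    · have hxa' : x = a := by
        rcases List.mem_cons.1 hx with h | h
        exacts [h, absurd (ht x h) hle]
      have htb : t.sum ≤ t.length * b := by
        simpa using List.sum_le_card_nsmul t b ht
      have hcb : c ≤ c * b := le_mul_of_one_le_right hc hb
      have := hmom (by linarith)
      rw [List.sum_cons, ← hxa'] at this
      linarith
  calc x ^ 2 = x * x := sq x
    _ ≤ a * (((a :: t).length + c) * b) := mul_le_mul hxa hxb hx0 (hx0.trans hxa)
    _ = _ := by ring

theorem sq_le_length_add_mul_prod_take_two {L : List ℝ} (hsort : L.Pairwise (· ≥ ·))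
    (hL : ∀ y ∈ L, 1 ≤ y) {x c : ℝ} (hx : x ∈ L) (hc : 0 ≤ c)
    (hmom : 1 < x → 2 * x ≤ c + L.sum) :
    x ^ 2 ≤ (L.length + c) * (L.take 2).prod := by
  have hx1 := hL x hx
  rcases L with _ | ⟨a, t⟩
  · simp at hx
  have hxa : x ≤ a := by
    rcases List.mem_cons.1 hx with h | h
    exacts [h.le, List.rel_of_pairwise_cons hsort h]
  rcases t with _ | ⟨b, s⟩
  · simpa using sq_le_length_add_mul_mul_of_mem_cons le_rfl hc (by simp) hx
      (by linarith) hxa hmom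
  · have hsb : ∀ y ∈ b :: s, y ≤ b := by
      intro y hy
      rcases List.mem_cons.1 hy with h | h
      exacts [h.le, List.rel_of_pairwise_cons (List.pairwise_cons.1 hsort).2 h]
    simpa [mul_assoc] using sq_le_length_add_mul_mul_of_mem_cons (hL b (by simp)) hc hsb hx
      (by linarith) hxa hmom

section MapJap

variable {L : List ℝ} {m : ℤ →₀ ℕ}

theorem one_le_of_coe_eq_map_jap (hL : (L : Multiset ℝ) = m.toMultiset.map jap) :
    ∀ y ∈ L, 1 ≤ y := by
  intro y hy
  rw [← Multiset.mem_coe, hL] at hy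
  obtain ⟨i, -, rfl⟩ := Multiset.mem_map.1 hy
  exact one_le_jap i

theorem jap_mem_of_coe_eq_map_jap (hL : (L : Multiset ℝ) = m.toMultiset.map jap) {j : ℤ}
    (hj : j ∈ m.support) : jap j ∈ L := by
  rw [← Multiset.mem_coe, hL]
  exact Multiset.mem_map_of_mem _ ((Finsupp.mem_toMultiset _ _).2 hj)

theorem sum_abs_mul_le_sum_of_coe_eq_map_jap (hL : (L : Multiset ℝ) = m.toMultiset.map jap)
    {s : Finset ℤ} (hs : m.support ⊆ s) : ∑ i ∈ s, |(i : ℝ)| * m i ≤ L.sum := by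
  classical
  rw [← Multiset.sum_coe, hL, Finsupp.sum_map_toMultiset_of_support_subset _ _ hs]
  refine Finset.sum_le_sum fun i _ => ?_
  rw [nsmul_eq_mul, mul_comm]
  exact mul_le_mul_of_nonneg_left (abs_le_jap i) (by positivity)

end MapJap

theorem japj_sq_mul_prod_tail_le_general
    (α β : ℤ →₀ ℕ)
    (L : List ℝ) (hsort : L.Pairwise (· ≥ ·))
    (hL : (L : Multiset ℝ) = Multiset.map jap (α + β).toMultiset)
    (N : ℕ) (hN : N = (α.sum fun _ n => n) + β.sum fun _ n => n)
    (π : ℝ)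
    (hπ : π = ∑ i ∈ α.support ∪ β.support, (i : ℝ) * ((α i : ℝ) - (β i : ℝ)))
    (j : ℤ) (hj : 1 ≤ α j + β j) :
    jap j ^ 2 * (L.drop 2).prod ≤
      ((N : ℝ) + |π|) * ∏ i ∈ α.support ∪ β.support, jap i ^ (α i + β i) := by
  classical
  have hsupp : (α + β).support ⊆ α.support ∪ β.support := Finsupp.support_add
  have hjsupp : j ∈ (α + β).support :=
    Finsupp.mem_support_iff.2 (by simp only [Finsupp.add_apply]; omega)
  have hlen : L.length = N := by
    rw [← Multiset.coe_card, hL, Multiset.card_map, Finsupp.card_toMultiset,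
      Finsupp.sum_add_index' (fun _ => rfl) (fun _ _ _ => rfl), hN]
    rfl
  have hL1 := one_le_of_coe_eq_map_jap hL
  have hmom : 1 < jap j → 2 * jap j ≤ |π| + L.sum := by
    intro h
    rw [jap_eq_abs_of_one_lt h, hπ]
    refine (two_mul_abs_le_abs_sum_mul_sub_add (hsupp hjsupp) hj).trans (add_le_add_right ?_ _)
    simpa using sum_abs_mul_le_sum_of_coe_eq_map_jap hL hsupp
  have hprod : L.prod = ∏ i ∈ α.support ∪ β.support, jap i ^ (α i + β i) := by
    rw [← Multiset.prod_coe, hL, Finsupp.prod_map_toMultiset_of_support_subset _ _ hsupp]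
    rfl
  have htail : 0 ≤ (L.drop 2).prod :=
    List.prod_nonneg fun y hy => zero_le_one.trans (hL1 y (List.mem_of_mem_drop hy))
  calc jap j ^ 2 * (L.drop 2).prod ≤ (N + |π|) * (L.take 2).prod * (L.drop 2).prod := by
        rw [← hlen]
        exact mul_le_mul_of_nonneg_right (sq_le_length_add_mul_prod_take_two hsort hL1
          (jap_mem_of_coe_eq_map_jap hL hjsupp) (abs_nonneg π) hmom) htail
    _ = _ := by rw [mul_assoc, List.prod_take_mul_prod_drop, hprod]

/-- With `n̂` the decreasing rearrangement of the multiset containing each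
`⟨i⟩` with multiplicity `α_i + β_i` (encoded by a sorted list `L`), for every `j` with
`α_j + β_j ≥ 1` one has `⟨j⟩² ∏_{l≥3} n̂_l ≤ (N + |π|) ∏_i ⟨i⟩^{α_i+β_i}`. -/
theorem japj_sq_mul_prod_tail_le
    (α β : ℤ →₀ ℕ)
    (hmass : (α.sum fun _ n => n) = β.sum fun _ n => n)
    (hmass1 : 1 ≤ α.sum fun _ n => n)
    (L : List ℝ) (hsort : L.Pairwise (· ≥ ·))
    (hL : (L : Multiset ℝ) = Multiset.map jap (α + β).toMultiset)
    (N : ℕ) (hN : N = (α.sum fun _ n => n) + β.sum fun _ n => n)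
    (π : ℝ)
    (hπ : π = ∑ i ∈ α.support ∪ β.support, (i : ℝ) * ((α i : ℝ) - (β i : ℝ)))
    (j : ℤ) (hj : 1 ≤ α j + β j) :
    jap j ^ 2 * (L.drop 2).prod ≤
      ((N : ℝ) + |π|) * ∏ i ∈ α.support ∪ β.support, jap i ^ (α i + β i) :=
  japj_sq_mul_prod_tail_le_general α β L hsort hL N hN π hπ j hj
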